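/- arXiv:2011.01371 — 4 statements merged into one kernel-verified Lean document; each statement's English description precedes it below -/
import Mathlib

section
/- Completeness of recovery (Proposition 1, part 1): if the attacker transforms an original observation ω into ω_A ∈ A(ω) by inserting symbols from Σ_I, deleting symbols from Σ_D, and substituting pairs from Σ_T, then there exists a matching string ω_R ∈ RA(ω_A) with P̂(ω_R) = ω. -/
/-- Symbols over `So ∪ AT` (observable symbols plus attack labels). -/
inductive ASym (So : Type*) where
  | obs : So → ASym So
  | del : So → ASym So
  | ins : So → ASym So
  | sub : So → So → ASym So

/-- Per-symbol cost: `0` on `So`, given costs on attack labels. -/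
def symCost {So : Type*} (cd ci : So → ℕ) (ct : So → So → ℕ) : ASym So → ℕ
  | .obs _ => 0
  | .del σ => cd σ
  | .ins σ => ci σ
  | .sub σ σ' => ct σ σ'

/-- The total cost `Πc` of an attack-labeled string. -/
def totalCost {So : Type*} (cd ci : So → ℕ) (ct : So → So → ℕ)
    (w : List (ASym So)) : ℕ :=
  (w.map (symCost cd ci ct)).sum

/-- Per-symbol action projection `P̂`: `σ ↦ σ`, `d_σ ↦ σ`, `i_σ ↦ ε`,
`t_{σσ'} ↦ σ`. -/
def phatSym {So : Type*} : ASym So → List So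
  | .obs σ => [σ]
  | .del σ => [σ]
  | .ins _ => []
  | .sub σ _ => [σ]

/-- `P̂` extended to strings. -/
def phat {So : Type*} : List (ASym So) → List So
  | [] => []
  | a :: w => phatSym a ++ phat w

/-- `IsMatch ΣD ΣI ΣT ωA ωR` says that `ωR` is a matching string for the
received string `ωA`, i.e., `ωR ∈ RA(ωA) = D*(a1+a1')D*…D*(am+am')D*`:
deletion labels (for symbols in `ΣD`) may be interleaved anywhere, and each
received symbol `ai` is matched by itself, by an insertion label `i_{ai}`
(if `ai ∈ ΣI`), or by a substitution label `t_{σ ai}` (if `(σ, ai) ∈ ΣT`). -/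
inductive IsMatch {So : Type*} (SD SI : Set So) (ST : Set (So × So)) :
    List So → List (ASym So) → Prop
  | nil : IsMatch SD SI ST [] []
  | del {ωA ωR} (σ : So) : σ ∈ SD → IsMatch SD SI ST ωA ωR →
      IsMatch SD SI ST ωA (ASym.del σ :: ωR)
  | keep {ωA ωR} (σ : So) : IsMatch SD SI ST ωA ωR →
      IsMatch SD SI ST (σ :: ωA) (ASym.obs σ :: ωR)
  | ins {ωA ωR} (σ : So) : σ ∈ SI → IsMatch SD SI ST ωA ωR →
      IsMatch SD SI ST (σ :: ωA) (ASym.ins σ :: ωR)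
  | sub {ωA ωR} (σ σ' : So) : (σ, σ') ∈ ST → IsMatch SD SI ST ωA ωR →
      IsMatch SD SI ST (σ' :: ωA) (ASym.sub σ σ' :: ωR)

/-- `Attacks SD SI ST ω ωA` says the attacker can transform the original
observation `ω` into `ωA ∈ A(ω)` by inserting symbols from `ΣI`, deleting
symbols in `ΣD`, and substituting according to `ΣT`. -/
inductive Attacks {So : Type*} (SD SI : Set So) (ST : Set (So × So)) :
    List So → List So → Prop
  | nil : Attacks SD SI ST [] []
  | insert {ω ωA} (σ : So) : σ ∈ SI → Attacks SD SI ST ω ωA →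
      Attacks SD SI ST ω (σ :: ωA)
  | keep {ω ωA} (σ : So) : Attacks SD SI ST ω ωA →
      Attacks SD SI ST (σ :: ω) (σ :: ωA)
  | delete {ω ωA} (σ : So) : σ ∈ SD → Attacks SD SI ST ω ωA →
      Attacks SD SI ST (σ :: ω) ωA
  | sub {ω ωA} (σ σ' : So) : (σ, σ') ∈ ST → Attacks SD SI ST ω ωA →
      Attacks SD SI ST (σ :: ω) (σ' :: ωA)

/-- Completeness of recovery (Proposition 1, part 1): if the attacker
transforms `ω` into `ωA ∈ A(ω)`, then there exists a matching string
`ωR ∈ RA(ωA)` with `P̂(ωR) = ω`. -/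
theorem recovery_complete {So : Type*} (SD SI : Set So) (ST : Set (So × So))
    (ω ωA : List So) (h : Attacks SD SI ST ω ωA) :
    ∃ ωR : List (ASym So), IsMatch SD SI ST ωA ωR ∧ phat ωR = ω := by
  induction h with
  | nil => exact ⟨[], .nil, rfl⟩
  | insert σ hσ _ ih =>
      obtain ⟨ωR, hm, hp⟩ := ih
      exact ⟨.ins σ :: ωR, .ins σ hσ hm, by simp [phat, phatSym, hp]⟩
  | keep σ _ ih =>
      obtain ⟨ωR, hm, hp⟩ := ih
      exact ⟨.obs σ :: ωR, .keep σ hm, by simp [phat, phatSym, hp]⟩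
  | delete σ hσ _ ih =>
      obtain ⟨ωR, hm, hp⟩ := ih
      exact ⟨.del σ :: ωR, .del σ hσ hm, by simp [phat, phatSym, hp]⟩
  | sub σ σ' hσ _ ih =>
      obtain ⟨ωR, hm, hp⟩ := ih
      exact ⟨.sub σ σ' :: ωR, .sub σ σ' hσ hm, by simp [phat, phatSym, hp]⟩
end

section
/- Cost-matched completeness of recovery (Proposition 1, part 2): if the attacker transforms ω into ω_A with total attack cost c_A ≤ C (each deletion, insertion, and substitution costing the same in both directions), then there exists a matching string ω_R ∈ RA(ω_A) with P̂(ω_R) = ω and Πc(ω_R) = c_A; in particular (ω_R, c_A) ∈ RA_C(ω_A). -/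
/-- `AttacksC cd ci ct SD SI ST ω ωA c` says the attacker can transform `ω`
into `ωA` with total attack cost `c` (insertions costing `ci`, deletions
`cd`, substitutions `ct`). -/
inductive AttacksC {So : Type*} (cd ci : So → ℕ) (ct : So → So → ℕ)
    (SD SI : Set So) (ST : Set (So × So)) : List So → List So → ℕ → Prop
  | nil : AttacksC cd ci ct SD SI ST [] [] 0
  | insert {ω ωA c} (σ : So) : σ ∈ SI → AttacksC cd ci ct SD SI ST ω ωA c →
      AttacksC cd ci ct SD SI ST ω (σ :: ωA) (c + ci σ)
  | keep {ω ωA c} (σ : So) : AttacksC cd ci ct SD SI ST ω ωA c →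
      AttacksC cd ci ct SD SI ST (σ :: ω) (σ :: ωA) c
  | delete {ω ωA c} (σ : So) : σ ∈ SD → AttacksC cd ci ct SD SI ST ω ωA c →
      AttacksC cd ci ct SD SI ST (σ :: ω) ωA (c + cd σ)
  | sub {ω ωA c} (σ σ' : So) : (σ, σ') ∈ ST → AttacksC cd ci ct SD SI ST ω ωA c →
      AttacksC cd ci ct SD SI ST (σ :: ω) (σ' :: ωA) (c + ct σ σ')

/-- Cost-matched completeness of recovery (Proposition 1, part 2): if the
attacker transforms `ω` into `ωA` with total cost `cA ≤ C` (each operation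
costing the same in both directions), then there is a matching string
`ωR ∈ RA(ωA)` with `P̂(ωR) = ω` and `Πc(ωR) = cA`; in particular
`(ωR, cA) ∈ RA_C(ωA)`. -/
theorem recovery_complete_cost {So : Type*} (SD SI : Set So)
    (ST : Set (So × So)) (cd ci : So → ℕ) (ct : So → So → ℕ) (C : ℕ)
    (ω ωA : List So) (cA : ℕ)
    (h : AttacksC cd ci ct SD SI ST ω ωA cA) (hC : cA ≤ C) :
    ∃ ωR : List (ASym So), IsMatch SD SI ST ωA ωR ∧ phat ωR = ω ∧
      totalCost cd ci ct ωR = cA ∧ totalCost cd ci ct ωR ≤ C := by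
  induction h with
  | nil => exact ⟨[], .nil, rfl, rfl, Nat.zero_le _⟩
  | @insert ω ωA c σ hσ _ ih =>
      obtain ⟨ωR, hm, hp, hc, -⟩ := ih ((Nat.le_add_right _ _).trans hC)
      have hcost : totalCost cd ci ct (.ins σ :: ωR) = c + ci σ := by
        simp [totalCost, symCost] at hc ⊢; omega
      exact ⟨.ins σ :: ωR, .ins σ hσ hm, by simpa [phat, phatSym], hcost,
        hcost ▸ hC⟩
  | keep σ _ ih =>
      obtain ⟨ωR, hm, hp, hc, h2⟩ := ih hC
      exact ⟨.obs σ :: ωR, .keep σ hm, by simp [phat, phatSym, hp],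
        by simpa [totalCost, symCost], by simpa [totalCost, symCost]⟩
  | @delete ω ωA c σ hσ _ ih =>
      obtain ⟨ωR, hm, hp, hc, -⟩ := ih ((Nat.le_add_right _ _).trans hC)
      have hcost : totalCost cd ci ct (.del σ :: ωR) = c + cd σ := by
        simp [totalCost, symCost] at hc ⊢; omega
      exact ⟨.del σ :: ωR, .del σ hσ hm, by simp [phat, phatSym, hp], hcost,
        hcost ▸ hC⟩
  | @sub ω ωA c σ σ' hσ _ ih =>
      obtain ⟨ωR, hm, hp, hc, -⟩ := ih ((Nat.le_add_right _ _).trans hC)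
      have hcost : totalCost cd ci ct (.sub σ σ' :: ωR) = c + ct σ σ' := by
        simp [totalCost, symCost] at hc ⊢; omega
      exact ⟨.sub σ σ' :: ωR, .sub σ σ' hσ hm, by simp [phat, phatSym, hp],
        hcost, hcost ▸ hC⟩
end

section
/- If the verifier V_F contains an F-confused cycle reachable from an initial state, then for every n ∈ ℕ there exist two strings s, s' in the modified system's language with equal projections P(s) = P(s'), such that s contains a fault event, s' contains no fault event, and both can be extended by a common-projection continuation of length at least n; hence the system is not C-constrained tamper-tolerant diagnosable. -/
/-- The natural projection `P : Σ* → Σo*`, erasing unobservable symbols. -/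
def natProj {E : Type*} (obs : E → Bool) : List E → List E
  | [] => []
  | σ :: s => if obs σ then σ :: natProj obs s else natProj obs s

/-- Extension of an NFA transition function to strings. -/
def extDelta {X E : Type*} (δ : X → E → Set X) : X → List E → Set X
  | x, [] => {x}
  | x, σ :: s => ⋃ x' ∈ δ x σ, extDelta δ x' s

/-- The language of the (modified) NFA: strings executable from some initial
state. -/
def Lng {X E : Type*} (δ : X → E → Set X) (X0 : Set X) (s : List E) : Prop :=
  ∃ x ∈ X0, (extDelta δ x s).Nonempty

/-- Verifier states: a pair of system states, each with a fault label in
`Δ = {N, F}` (`false` = `N`, `true` = `F`). -/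
abbrev VState (X : Type*) := X × Bool × X × Bool

/-- One transition of the `F`-verifier `V_F`: on an observable event both
components move; on an unobservable non-fault event either or both components
move; on a (unobservable) fault event the moving component's label becomes
`F`. -/
inductive VStep {X E : Type*} (δ : X → E → Set X) (obs fault : E → Bool) :
    VState X → E → VState X → Prop
  | obsStep {x1 l1 x2 l2 y1 y2 : _} {e : E} : obs e = true →
      y1 ∈ δ x1 e → y2 ∈ δ x2 e →
      VStep δ obs fault (x1, l1, x2, l2) e (y1, l1, y2, l2)
  | uoLeft {x1 l1 x2 l2 y1 : _} {e : E} : obs e = false → fault e = false →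
      y1 ∈ δ x1 e → VStep δ obs fault (x1, l1, x2, l2) e (y1, l1, x2, l2)
  | uoRight {x1 l1 x2 l2 y2 : _} {e : E} : obs e = false → fault e = false →
      y2 ∈ δ x2 e → VStep δ obs fault (x1, l1, x2, l2) e (x1, l1, y2, l2)
  | uoBoth {x1 l1 x2 l2 y1 y2 : _} {e : E} : obs e = false → fault e = false →
      y1 ∈ δ x1 e → y2 ∈ δ x2 e →
      VStep δ obs fault (x1, l1, x2, l2) e (y1, l1, y2, l2)
  | fLeft {x1 l1 x2 l2 y1 : _} {e : E} : fault e = true →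
      y1 ∈ δ x1 e → VStep δ obs fault (x1, l1, x2, l2) e (y1, true, x2, l2)
  | fRight {x1 l1 x2 l2 y2 : _} {e : E} : fault e = true →
      y2 ∈ δ x2 e → VStep δ obs fault (x1, l1, x2, l2) e (x1, l1, y2, true)
  | fBoth {x1 l1 x2 l2 y1 y2 : _} {e : E} : fault e = true →
      y1 ∈ δ x1 e → y2 ∈ δ x2 e →
      VStep δ obs fault (x1, l1, x2, l2) e (y1, true, y2, true)

/-- Paths along a labeled transition relation. -/
inductive RelPath {Q E : Type*} (step : Q → E → Q → Prop) : Q → List E → Q → Prop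
  | refl (q : Q) : RelPath step q [] q
  | cons {q q' q'' : Q} {e : E} {es : List E} :
      step q e q' → RelPath step q' es q'' → RelPath step q (e :: es) q''

/-- Paths along which every visited state satisfies `P`. -/
inductive RelPathIn {Q E : Type*} (step : Q → E → Q → Prop) (P : Q → Prop) :
    Q → List E → Q → Prop
  | refl (q : Q) : P q → RelPathIn step P q [] q
  | cons {q q' q'' : Q} {e : E} {es : List E} : P q →
      step q e q' → RelPathIn step P q' es q'' → RelPathIn step P q (e :: es) q''

/-- A verifier state is confused if its two fault labels differ
(`(N, F)` or `(F, N)`). -/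
def Confused {X : Type*} (q : VState X) : Prop := q.2.1 ≠ q.2.2.2

/-- `C`-constrained tamper-tolerant diagnosability of the modified system:
there is `n` such that every continuation `t` with `|t| ≥ n` after a fault
forces every projection-equivalent string of the language to contain the
fault. -/
def Diagnosable {X E : Type*} (δ : X → E → Set X) (X0 : Set X)
    (obs fault : E → Bool) : Prop :=
  ∃ n : ℕ, ∀ (s : List E) (f : E) (t : List E),
    (∀ e ∈ s, fault e = false) → fault f = true →
    Lng δ X0 (s ++ [f] ++ t) → n ≤ t.length →
    ∀ s' : List E, natProj obs s' = natProj obs (s ++ [f] ++ t) →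
      Lng δ X0 s' → ∃ e ∈ s', fault e = true

section Aux

variable {X E : Type*}

lemma natProj_append (obs : E → Bool) (a b : List E) :
    natProj obs (a ++ b) = natProj obs a ++ natProj obs b := by
  induction a with
  | nil => rfl
  | cons e a ih => by_cases h : obs e <;> simp [natProj, h, ih]

lemma natProj_nil_forall (obs : E → Bool) :
    ∀ s : List E, natProj obs s = [] → ∀ e ∈ s, obs e = false := by
  intro s
  induction s with
  | nil => simp
  | cons e s ih =>
    intro h f hf
    by_cases ho : obs e
    · simp [natProj, ho] at h
    · rcases List.mem_cons.1 hf with rfl | hf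
      · simpa using ho
      · exact ih (by simpa [natProj, ho] using h) f hf

lemma mem_extDelta_cons (δ : X → E → Set X) {x y z : X} {e : E} {s : List E}
    (h1 : y ∈ δ x e) (h2 : z ∈ extDelta δ y s) : z ∈ extDelta δ x (e :: s) := by
  simp only [extDelta, Set.mem_iUnion]
  exact ⟨y, h1, h2⟩

lemma mem_extDelta_append (δ : X → E → Set X) :
    ∀ (s t : List E) (x y z : X), y ∈ extDelta δ x s → z ∈ extDelta δ y t →
      z ∈ extDelta δ x (s ++ t) := by
  intro s
  induction s with
  | nil =>
    intro t x y z hy hz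
    simp only [extDelta, Set.mem_singleton_iff] at hy
    subst hy; simpa using hz
  | cons e s ih =>
    intro t x y z hy hz
    simp only [extDelta, Set.mem_iUnion] at hy
    obtain ⟨w, hw, hy⟩ := hy
    exact mem_extDelta_cons δ hw (ih t w y z hy hz)

lemma mem_extDelta_join_replicate (δ : X → E → Set X) {z : X} {v : List E}
    (h : z ∈ extDelta δ z v) : ∀ k : ℕ, z ∈ extDelta δ z (List.replicate k v).flatten := by
  intro k
  induction k with
  | zero => simp [extDelta]
  | succ k ih =>
    rw [List.replicate_succ, List.flatten_cons]
    exact mem_extDelta_append δ v _ z z z h ih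

lemma natProj_join_replicate (obs : E → Bool) (v : List E) :
    ∀ k : ℕ, natProj obs (List.replicate k v).flatten
      = (List.replicate k (natProj obs v)).flatten := by
  intro k
  induction k with
  | zero => rfl
  | succ k ih => simp [List.replicate_succ, natProj_append, ih]

lemma length_join_replicate (v : List E) (k : ℕ) :
    ((List.replicate k v).flatten).length = k * v.length := by
  induction k with
  | zero => simp
  | succ k ih => simp [List.replicate_succ, ih]; ring

lemma relPathIn_head {Q : Type*} {step : Q → E → Q → Prop} {P : Q → Prop}
    {q q' : Q} {es : List E} (h : RelPathIn step P q es q') : P q := by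
  cases h <;> assumption

lemma relPathIn_toRelPath {Q : Type*} {step : Q → E → Q → Prop} {P : Q → Prop}
    {q q' : Q} {es : List E} (h : RelPathIn step P q es q') :
    RelPath step q es q' := by
  induction h with
  | refl q _ => exact RelPath.refl q
  | cons _ hs _ ih => exact RelPath.cons hs ih

lemma vpath_extract (δ : X → E → Set X) (obs fault : E → Bool)
    (hfu : ∀ e, fault e = true → obs e = false)
    {p q : VState X} {es : List E} (h : RelPath (VStep δ obs fault) p es q) :
    ∃ u1 u2 : List E,
      q.1 ∈ extDelta δ p.1 u1 ∧ q.2.2.1 ∈ extDelta δ p.2.2.1 u2 ∧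
      natProj obs u1 = natProj obs u2 ∧
      q.2.1 = (p.2.1 || u1.any fault) ∧
      q.2.2.2 = (p.2.2.2 || u2.any fault) ∧
      es.length ≤ u1.length + u2.length := by
  induction h with
  | refl q => exact ⟨[], [], rfl, rfl, rfl, by simp, by simp, by simp⟩
  | @cons p p' q' e es' hstep hpath ih =>
    obtain ⟨u1, u2, h1, h2, hproj, hl1, hl2, hlen⟩ := ih
    cases hstep with
    | @obsStep x1 l1 x2 l2 y1 y2 _ ho hy1 hy2 =>
      have hf : fault e = false := by
        cases hfe : fault e
        · rfl
        · exact absurd (hfu e hfe) (by simp [ho])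
      exact ⟨e :: u1, e :: u2, mem_extDelta_cons δ hy1 h1, mem_extDelta_cons δ hy2 h2,
        by simp [natProj, ho, hproj],
        by simp [hf, hl1], by simp [hf, hl2], by simp; omega⟩
    | @uoLeft x1 l1 x2 l2 y1 _ ho hf hy1 =>
      exact ⟨e :: u1, u2, mem_extDelta_cons δ hy1 h1, h2,
        by simp [natProj, ho, hproj],
        by simp [hf, hl1], hl2, by simp; omega⟩
    | @uoRight x1 l1 x2 l2 y2 _ ho hf hy2 =>
      exact ⟨u1, e :: u2, h1, mem_extDelta_cons δ hy2 h2,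
        by simp [natProj, ho, hproj],
        hl1, by simp [hf, hl2], by simp; omega⟩
    | @uoBoth x1 l1 x2 l2 y1 y2 _ ho hf hy1 hy2 =>
      exact ⟨e :: u1, e :: u2, mem_extDelta_cons δ hy1 h1, mem_extDelta_cons δ hy2 h2,
        by simp [natProj, ho, hproj],
        by simp [hf, hl1], by simp [hf, hl2], by simp; omega⟩
    | @fLeft x1 l1 x2 l2 y1 _ hf hy1 =>
      have ho : obs e = false := hfu e hf
      exact ⟨e :: u1, u2, mem_extDelta_cons δ hy1 h1, h2,
        by simp [natProj, ho, hproj],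
        by simp [hf]; simpa using hl1, hl2, by simp; omega⟩
    | @fRight x1 l1 x2 l2 y2 _ hf hy2 =>
      have ho : obs e = false := hfu e hf
      exact ⟨u1, e :: u2, h1, mem_extDelta_cons δ hy2 h2,
        by simp [natProj, ho, hproj],
        hl1, by simp [hf]; simpa using hl2, by simp; omega⟩
    | @fBoth x1 l1 x2 l2 y1 y2 _ hf hy1 hy2 =>
      have ho : obs e = false := hfu e hf
      exact ⟨e :: u1, e :: u2, mem_extDelta_cons δ hy1 h1, mem_extDelta_cons δ hy2 h2,
        by simp [natProj, ho, hproj],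
        by simp [hf]; simpa using hl1, by simp [hf]; simpa using hl2,
        by simp; omega⟩

lemma exists_first_fault (fault : E → Bool) :
    ∀ s : List E, (∃ e ∈ s, fault e = true) →
      ∃ a f b, s = a ++ f :: b ∧ (∀ e ∈ a, fault e = false) ∧ fault f = true := by
  intro s
  induction s with
  | nil => simp
  | cons e s ih =>
    intro h
    by_cases hf : fault e = true
    · exact ⟨[], e, s, by simp, by simp, hf⟩
    · have : ∃ e ∈ s, fault e = true := by
        obtain ⟨f, hfs, hft⟩ := h
        rcases List.mem_cons.1 hfs with rfl | hfs
        · exact absurd hft hf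
        · exact ⟨f, hfs, hft⟩
      obtain ⟨a, f, b, hs, ha, hft⟩ := ih this
      exact ⟨e :: a, f, b, by simp [hs], by
        intro e' he'
        rcases List.mem_cons.1 he' with rfl | he'
        · exact Bool.eq_false_iff.2 hf
        · exact ha e' he', hft⟩

lemma build_lemma (δ : X → E → Set X) (X0 : Set X) (obs fault : E → Bool)
    (hnoc : ¬ ∃ (x : X) (s : List E), s ≠ [] ∧ (∀ e ∈ s, obs e = false) ∧
      x ∈ extDelta δ x s)
    (x0 y0 z1 z2 : X) (u1 u2 v1 v2 : List E)
    (hx0 : x0 ∈ X0) (hy0 : y0 ∈ X0)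
    (hz1 : z1 ∈ extDelta δ x0 u1) (hz2 : z2 ∈ extDelta δ y0 u2)
    (hup : natProj obs u1 = natProj obs u2)
    (hu1f : ∃ e ∈ u1, fault e = true) (hu2f : ∀ e ∈ u2, fault e = false)
    (hv1 : z1 ∈ extDelta δ z1 v1) (hv2 : z2 ∈ extDelta δ z2 v2)
    (hvp : natProj obs v1 = natProj obs v2) (hv2f : ∀ e ∈ v2, fault e = false)
    (hne : v1 ≠ [] ∨ v2 ≠ []) (n : ℕ) :
    ∃ s s' t t' : List E,
      natProj obs s = natProj obs s' ∧
      (∃ e ∈ s, fault e = true) ∧ (∀ e ∈ s', fault e = false) ∧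
      (∀ e ∈ t', fault e = false) ∧
      Lng δ X0 (s ++ t) ∧ Lng δ X0 (s' ++ t') ∧
      natProj obs t = natProj obs t' ∧ n ≤ t.length := by
  have hv1ne : v1 ≠ [] := by
    intro h
    subst h
    have hv2ne : v2 ≠ [] := by tauto
    have hobs : ∀ e ∈ v2, obs e = false :=
      natProj_nil_forall obs v2 (by simpa [natProj] using hvp.symm)
    exact hnoc ⟨z2, v2, hv2ne, hobs, hv2⟩
  refine ⟨u1, u2, (List.replicate n v1).flatten, (List.replicate n v2).flatten,
    hup, hu1f, hu2f, ?_, ?_, ?_, ?_, ?_⟩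
  · intro e he
    obtain ⟨l, hl, hel⟩ := List.mem_flatten.1 he
    exact hv2f e ((List.eq_of_mem_replicate hl) ▸ hel)
  · exact ⟨x0, hx0, z1, mem_extDelta_append δ _ _ _ _ _ hz1
      (mem_extDelta_join_replicate δ hv1 n)⟩
  · exact ⟨y0, hy0, z2, mem_extDelta_append δ _ _ _ _ _ hz2
      (mem_extDelta_join_replicate δ hv2 n)⟩
  · rw [natProj_join_replicate, natProj_join_replicate, hvp]
  · rw [length_join_replicate]
    have : 1 ≤ v1.length := List.length_pos_iff.2 hv1ne
    calc n = n * 1 := (mul_one n).symm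
    _ ≤ n * v1.length := Nat.mul_le_mul_left n this

lemma main_strong (δ : X → E → Set X) (X0 : Set X) (obs fault : E → Bool)
    (hfu : ∀ e, fault e = true → obs e = false)
    (hnoc : ¬ ∃ (x : X) (s : List E), s ≠ [] ∧ (∀ e ∈ s, obs e = false) ∧
      x ∈ extDelta δ x s)
    (hcycle : ∃ x0 y0 : X, x0 ∈ X0 ∧ y0 ∈ X0 ∧
      ∃ (q : VState X) (es1 es2 : List E),
        RelPath (VStep δ obs fault) (x0, false, y0, false) es1 q ∧
        es2 ≠ [] ∧ RelPathIn (VStep δ obs fault) Confused q es2 q) (n : ℕ) :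
    ∃ s s' t t' : List E,
      natProj obs s = natProj obs s' ∧
      (∃ e ∈ s, fault e = true) ∧ (∀ e ∈ s', fault e = false) ∧
      (∀ e ∈ t', fault e = false) ∧
      Lng δ X0 (s ++ t) ∧ Lng δ X0 (s' ++ t') ∧
      natProj obs t = natProj obs t' ∧ n ≤ t.length := by
  obtain ⟨x0, y0, hx0, hy0, ⟨z1, m1, z2, m2⟩, es1, es2, hpath, hes2, hcyc⟩ := hcycle
  have hconf' : Confused (z1, m1, z2, m2) := relPathIn_head hcyc
  have hconf : m1 ≠ m2 := hconf'
  obtain ⟨u1, u2, hu1, hu2, hup, hul1, hul2, _⟩ := vpath_extract δ obs fault hfu hpath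
  obtain ⟨v1, v2, hv1, hv2, hvp, hvl1, hvl2, hvlen⟩ :=
    vpath_extract δ obs fault hfu (relPathIn_toRelPath hcyc)
  simp only at hu1 hu2 hul1 hul2 hv1 hv2 hvl1 hvl2
  have hne : v1 ≠ [] ∨ v2 ≠ [] := by
    by_contra h
    push_neg at h
    obtain ⟨h1, h2⟩ := h
    rw [h1, h2] at hvlen
    simp at hvlen
    exact hes2 hvlen
  cases m1 with
  | false =>
    cases m2 with
    | false => exact absurd rfl hconf
    | true =>
      -- left is fault-free, right is faulty; swap roles
      have hu2f : ∃ e ∈ u2, fault e = true := by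
        have : u2.any fault = true := by simpa using hul2
        simpa using this
      have hu1f : ∀ e ∈ u1, fault e = false := by
        have : u1.any fault = false := by simpa using hul1.symm
        intro e he
        simpa using (List.any_eq_false.1 this) e he
      have hv1f : ∀ e ∈ v1, fault e = false := by
        have : v1.any fault = false := by simpa using hvl1.symm
        intro e he
        simpa using (List.any_eq_false.1 this) e he
      obtain ⟨s, s', t, t', a, b, c, d, e, f, g, h⟩ :=
        build_lemma δ X0 obs fault hnoc y0 x0 z2 z1 u2 u1 v2 v1 hy0 hx0
          hu2 hu1 hup.symm hu2f hu1f hv2 hv1 hvp.symm hv1f hne.symm n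
      exact ⟨s, s', t, t', a, b, c, d, e, f, g, h⟩
  | true =>
    cases m2 with
    | true => exact absurd rfl hconf
    | false =>
      have hu1f : ∃ e ∈ u1, fault e = true := by
        have : u1.any fault = true := by simpa using hul1
        simpa using this
      have hu2f : ∀ e ∈ u2, fault e = false := by
        have : u2.any fault = false := by simpa using hul2.symm
        intro e he
        simpa using (List.any_eq_false.1 this) e he
      have hv2f : ∀ e ∈ v2, fault e = false := by
        have : v2.any fault = false := by simpa using hvl2.symm
        intro e he
        simpa using (List.any_eq_false.1 this) e he
      exact build_lemma δ X0 obs fault hnoc x0 y0 z1 z2 u1 u2 v1 v2 hx0 hy0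
        hu1 hu2 hup hu1f hu2f hv1 hv2 hvp hv2f hne n

end Aux

/-- If the verifier `V_F` contains an `F`-confused cycle reachable from an
initial state, then for every `n` there exist two strings of the language
with equal projections, one containing a fault and one fault-free, both
extendable by common-projection continuations of length at least `n`; hence
the system is not `C`-constrained tamper-tolerant diagnosable. -/
theorem f_confused_cycle_not_diagnosable {X E : Type*}
    (δ : X → E → Set X) (X0 : Set X) (obs fault : E → Bool)
    (hfu : ∀ e, fault e = true → obs e = false)
    (hlive : ∀ s : List E, Lng δ X0 s → ∃ e : E, Lng δ X0 (s ++ [e]))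
    (hnoc : ¬ ∃ (x : X) (s : List E), s ≠ [] ∧ (∀ e ∈ s, obs e = false) ∧
      x ∈ extDelta δ x s)
    (hcycle : ∃ x0 y0 : X, x0 ∈ X0 ∧ y0 ∈ X0 ∧
      ∃ (q : VState X) (es1 es2 : List E),
        RelPath (VStep δ obs fault) (x0, false, y0, false) es1 q ∧
        es2 ≠ [] ∧ RelPathIn (VStep δ obs fault) Confused q es2 q) :
    (∀ n : ℕ, ∃ s s' t t' : List E,
      natProj obs s = natProj obs s' ∧
      (∃ e ∈ s, fault e = true) ∧ (∀ e ∈ s', fault e = false) ∧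
      Lng δ X0 (s ++ t) ∧ Lng δ X0 (s' ++ t') ∧
      natProj obs t = natProj obs t' ∧ n ≤ t.length) ∧
    ¬ Diagnosable δ X0 obs fault := by
  constructor
  · intro n
    obtain ⟨s, s', t, t', hp, hsf, hs'f, _, hL1, hL2, htp, hlen⟩ :=
      main_strong δ X0 obs fault hfu hnoc hcycle n
    exact ⟨s, s', t, t', hp, hsf, hs'f, hL1, hL2, htp, hlen⟩
  · rintro ⟨n, h⟩
    obtain ⟨s, s', t, t', hp, hsf, hs'f, ht'f, hL1, hL2, htp, hlen⟩ :=
      main_strong δ X0 obs fault hfu hnoc hcycle n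
    obtain ⟨a, f, b, hs, haf, hff⟩ := exists_first_fault fault s hsf
    have heq : a ++ [f] ++ (b ++ t) = s ++ t := by rw [hs]; simp
    have hL1' : Lng δ X0 (a ++ [f] ++ (b ++ t)) := by rw [heq]; exact hL1
    have hlen' : n ≤ (b ++ t).length := by
      simp only [List.length_append]; omega
    have hproj : natProj obs (s' ++ t') = natProj obs (a ++ [f] ++ (b ++ t)) := by
      rw [heq, natProj_append, natProj_append, hp, htp]
    obtain ⟨e, he, hef⟩ := h a f (b ++ t) haf hff hL1' hlen' (s' ++ t') hproj hL2
    rcases List.mem_append.1 he with he | he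
    · rw [hs'f e he] at hef; exact Bool.false_ne_true hef
    · rw [ht'f e he] at hef; exact Bool.false_ne_true hef
end

section
/- Least-cost state estimation correctness (reduced-state soundness): let H be the product of the plant NFA with the cost automaton G_sc(C+1), and let RH retain only states (x, x_s, c) ∈ X_f for which no (x, x_s, c') ∈ X_f exists with c' < c. Then every least-cost final estimate of H is preserved: if (x, c) ∈ E_H(ω_A) (i.e., (x, x_{s,|ω_A|}, c) ∈ X_f and no (x, x_{s,|ω_A|}, c') ∈ X_f with c' < c), then (x, c) ∈ E_RH(ω_A). -/
/-- One transition of `H = AC(G_nd ‖ G_sc(C+1))`: on a symbol `a ∈ Σo ∪ AT`,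
the plant component moves via `Rp x a` (i.e. `R({x}, P̂(a))`), the stage
component moves via the (partial, deterministic) `δs`, and the cost is
incremented by `π a` and capped at `C + 1`. -/
def Hstep {X S A : Type*} (Rp : X → A → Set X) (δs : S → A → Option S)
    (π : A → ℕ) (C : ℕ) (q q' : X × S × ℕ) : Prop :=
  ∃ a : A, q'.1 ∈ Rp q.1 a ∧ δs q.2.1 a = some q'.2.1 ∧
    q'.2.2 = min (q.2.2 + π a) (C + 1)

/-- The set `X_f` of states of `H`: those reachable from an initial state
`(x0, s0, 0)` with `(x0, s0) ∈ X_{0,f}`. -/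
inductive HReach {X S A : Type*} (Rp : X → A → Set X) (δs : S → A → Option S)
    (π : A → ℕ) (C : ℕ) (X0f : Set (X × S)) : X × S × ℕ → Prop
  | init (x : X) (s : S) : (x, s) ∈ X0f → HReach Rp δs π C X0f (x, s, 0)
  | step {q q' : X × S × ℕ} : HReach Rp δs π C X0f q →
      Hstep Rp δs π C q q' → HReach Rp δs π C X0f q'

/-- The reduced state set `X_Rf`: states of `T` whose cost is minimal among
states of `T` with the same plant state and stage. -/
def MinimalIn {X S : Type*} (T : Set (X × S × ℕ)) : Set (X × S × ℕ) :=
  {q ∈ T | ¬ ∃ c' < q.2.2, (q.1, q.2.1, c') ∈ T}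

/-- States of `RH = AC(X_Rf, …)`: reachable from the initial states through
transitions staying inside `X_Rf`. -/
inductive RHReach {X S A : Type*} (Rp : X → A → Set X) (δs : S → A → Option S)
    (π : A → ℕ) (C : ℕ) (X0f : Set (X × S)) : X × S × ℕ → Prop
  | init (x : X) (s : S) : (x, s) ∈ X0f →
      (x, s, 0) ∈ MinimalIn {q | HReach Rp δs π C X0f q} →
      RHReach Rp δs π C X0f (x, s, 0)
  | step {q q' : X × S × ℕ} : RHReach Rp δs π C X0f q →
      Hstep Rp δs π C q q' →
      q' ∈ MinimalIn {p | HReach Rp δs π C X0f p} →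
      RHReach Rp δs π C X0f q'

/-- `HReach` with an explicit path length. -/
inductive HReachN {X S A : Type*} (Rp : X → A → Set X) (δs : S → A → Option S)
    (π : A → ℕ) (C : ℕ) (X0f : Set (X × S)) : ℕ → X × S × ℕ → Prop
  | init (x : X) (s : S) : (x, s) ∈ X0f → HReachN Rp δs π C X0f 0 (x, s, 0)
  | step {n : ℕ} {q q' : X × S × ℕ} : HReachN Rp δs π C X0f n q →
      Hstep Rp δs π C q q' → HReachN Rp δs π C X0f (n + 1) q'

lemma hreach_of_hreachN {X S A : Type*} {Rp : X → A → Set X} {δs : S → A → Option S}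
    {π : A → ℕ} {C : ℕ} {X0f : Set (X × S)} {n : ℕ} {q : X × S × ℕ}
    (h : HReachN Rp δs π C X0f n q) : HReach Rp δs π C X0f q := by
  induction h with
  | init x s h => exact HReach.init x s h
  | step _ hs ih => exact HReach.step ih hs

lemma hreachN_of_hreach {X S A : Type*} {Rp : X → A → Set X} {δs : S → A → Option S}
    {π : A → ℕ} {C : ℕ} {X0f : Set (X × S)} {q : X × S × ℕ}
    (h : HReach Rp δs π C X0f q) : ∃ n, HReachN Rp δs π C X0f n q := by
  induction h with
  | init x s h => exact ⟨0, HReachN.init x s h⟩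
  | step _ hs ih => obtain ⟨n, hn⟩ := ih; exact ⟨n + 1, HReachN.step hn hs⟩

lemma hreach_cost_le {X S A : Type*} {Rp : X → A → Set X} {δs : S → A → Option S}
    {π : A → ℕ} {C : ℕ} {X0f : Set (X × S)} {q : X × S × ℕ}
    (h : HReach Rp δs π C X0f q) : q.2.2 ≤ C + 1 := by
  induction h with
  | init x s h => exact Nat.zero_le _
  | step _ hs ih =>
    obtain ⟨a, _, _, hc⟩ := hs
    rw [hc]; exact min_le_right _ _

lemma key_lemma {X S A : Type*} (Rp : X → A → Set X) (δs : S → A → Option S)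
    (π : A → ℕ) (C : ℕ) (X0f : Set (X × S)) :
    ∀ c n (x : X) (s : S), HReachN Rp δs π C X0f n (x, s, c) →
      (¬ ∃ c' < c, HReach Rp δs π C X0f (x, s, c')) →
      RHReach Rp δs π C X0f (x, s, c) := by
  intro c
  induction c using Nat.strong_induction_on with
  | _ c ihc =>
  intro n
  induction n using Nat.strong_induction_on with
  | _ n ihn =>
  intro x s hr hmin
  cases hr with
  | init x s h0 =>
    exact RHReach.init x s h0 ⟨HReach.init x s h0, by simp⟩
  | @step m q _ hqm hstep =>
    obtain ⟨y, t, c0⟩ := q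
    obtain ⟨a, hx, hδ, hc⟩ := hstep
    simp only at hx hδ hc
    have hq0 : HReach Rp δs π C X0f (y, t, c0) := hreach_of_hreachN hqm
    have hex : ∃ c', HReach Rp δs π C X0f (y, t, c') := ⟨c0, hq0⟩
    classical
    set c0' := Nat.find hex with hc0'def
    have hfind : HReach Rp δs π C X0f (y, t, c0') := Nat.find_spec hex
    have hmin0 : ¬ ∃ c'' < c0', HReach Rp δs π C X0f (y, t, c'') := by
      rintro ⟨c'', hlt, hr''⟩
      exact Nat.find_min hex hlt hr''
    have hle0 : c0' ≤ c0 := Nat.find_min' hex hq0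
    have hcap : c0 ≤ C + 1 := hreach_cost_le hq0
    have hc0c : c0 ≤ c := by
      rw [hc]; exact le_min (Nat.le_add_right _ _) hcap
    -- the step from the least-cost predecessor reaches exactly (x, s, c)
    have hstep' : Hstep Rp δs π C (y, t, c0') (x, s, c) := by
      refine ⟨a, hx, hδ, ?_⟩
      have hle : min (c0' + π a) (C + 1) ≤ c := by
        rw [hc]; exact min_le_min (by omega) le_rfl
      have hreach' : HReach Rp δs π C X0f (x, s, min (c0' + π a) (C + 1)) :=
        HReach.step hfind ⟨a, hx, hδ, rfl⟩
      rcases lt_or_eq_of_le hle with hlt | heq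
      · exact absurd ⟨_, hlt, hreach'⟩ hmin
      · simp only; omega
    have hpred : RHReach Rp δs π C X0f (y, t, c0') := by
      rcases lt_or_eq_of_le (le_trans hle0 hc0c) with hlt | heq
      · obtain ⟨n0, hn0⟩ := hreachN_of_hreach hfind
        exact ihc c0' hlt n0 y t hn0 hmin0
      · have hc0eq : c0 = c := by omega
        have hcc : c0' = c := by omega
        rw [hcc]; rw [hcc] at hmin0
        rw [hc0eq] at hqm
        exact ihn m (Nat.lt_succ_self m) y t hqm hmin0
    exact RHReach.step hpred hstep'
      ⟨HReach.step hfind hstep', by simpa using hmin⟩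

/-- Reduced-state soundness of least-cost state estimation (Proposition 2):
every least-cost final estimate of `H` is preserved in `RH`.  If
`(x, sf, c) ∈ X_f` (where `sf` is the final observation stage) and no
`(x, sf, c') ∈ X_f` has `c' < c`, then `(x, sf, c)` is a state of
`RH = AC(X_Rf, …)`, i.e. `(x, c) ∈ E_RH(ω_A)`. -/
theorem least_cost_estimate_preserved {X S A : Type*}
    (Rp : X → A → Set X) (δs : S → A → Option S) (π : A → ℕ) (C : ℕ)
    (X0f : Set (X × S)) (sf : S) (x : X) (c : ℕ)
    (h1 : HReach Rp δs π C X0f (x, sf, c))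
    (h2 : ¬ ∃ c' < c, HReach Rp δs π C X0f (x, sf, c')) :
    RHReach Rp δs π C X0f (x, sf, c) := by
  obtain ⟨n, hn⟩ := hreachN_of_hreach h1
  exact key_lemma Rp δs π C X0f c n x sf hn h2
end
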